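/- Inverse inequalities for rotated-Q1 IFE functions, uniform in the interface location (reference-element form, h = 1): there exists a constant C > 0 depending only on β⁻ and β⁺ such that for all d, e ∈ (0,1) and all coefficient vectors (c⁻, c⁺) satisfying the jump conditions (J1)–(J3), the associated piecewise rotated-Q1 function φ satisfies, for all integers 0 ≤ l ≤ k ≤ 2: (i) |φ|_{k,∞,T} ≤ C |φ|_{k,T}, and (ii) |φ|_{k,T} ≤ C |φ|_{l,T}, where |φ|_{k,T}² = Σ_{|α| = k} ( ∫_{T⁻} |∂^α p⁻|² dx dy + ∫_{T⁺} |∂^α p⁺|² dx dy ) and |φ|_{k,∞,T} = max over s = ± and multi-indices |α| = k of sup_{(x,y) ∈ Tˢ} |∂^α pˢ(x,y)|. -/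

import Mathlib

/-!
By (J1)–(J2) the coefficient vectors of the two pieces differ by a multiple of the single jump
`δ = c₂⁺ − c₂⁻`, and by (J3) `β^± (1 + (d − e)²) |δ| = |β⁺ − β⁻| |L(c^∓)|`, where `L` is the
mean normal flux along `DE`; so the coefficients of either piece control those of the other.
Whatever the interface, one of `T⁻`, `T⁺` contains a fixed triangle (according as `d ≥ 1/2` or
`d ≤ 1/2`), on which the `L²` norm of a rotated-Q1 polynomial dominates its coefficients. The
first derivatives are again rotated-Q1 polynomials and `|φ|²_{2,T} = 8 c₄²`, so all coefficients
of order `≥ k` of both pieces are bounded by a multiple of `|φ|_{k,T}`, uniformly in `d, e`.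
Conversely, on the unit square the derivatives of order `k` and `|φ|_{k,T}` are bounded by
those coefficients, and both inequalities follow.
-/

open MeasureTheory Set

noncomputable section

/-- The rotated-Q1 polynomial `c₁ + c₂ x + c₃ y + c₄ (x² − y²)` with coefficient
vector `c = (c 0, c 1, c 2, c 3)`. -/
def rq1 (c : Fin 4 → ℝ) (x y : ℝ) : ℝ :=
  c 0 + c 1 * x + c 2 * y + c 3 * (x ^ 2 - y ^ 2)

/-- The piecewise rotated-Q1 function on the reference Type II interface element:
`p⁻` where `x ≤ d + (e − d) y`, `p⁺` elsewhere. -/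
def phiFn (d e : ℝ) (cm cp : Fin 4 → ℝ) (x y : ℝ) : ℝ :=
  if x ≤ d + (e - d) * y then rq1 cm x y else rq1 cp x y

/-- Jump condition (J1): continuity at the interface points `D = (d,0)` and `E = (e,1)`. -/
def J1 (d e : ℝ) (cm cp : Fin 4 → ℝ) : Prop :=
  rq1 cm d 0 = rq1 cp d 0 ∧ rq1 cm e 1 = rq1 cp e 1

/-- Jump condition (J2): matching of the `x² − y²` coefficients. -/
def J2 (cm cp : Fin 4 → ℝ) : Prop := cm 3 = cp 3

/-- The flux defect `∫₀¹ (β⁺∇p⁺ − β⁻∇p⁻)((1−t)d + te, t) · (1, d − e) dt`. -/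
def fluxDefect (βm βp d e : ℝ) (cm cp : Fin 4 → ℝ) : ℝ :=
  ∫ t in (0:ℝ)..1,
    ((βp * (cp 1 + 2 * cp 3 * ((1 - t) * d + t * e))
        - βm * (cm 1 + 2 * cm 3 * ((1 - t) * d + t * e))) * 1
      + (βp * (cp 2 - 2 * cp 3 * t) - βm * (cm 2 - 2 * cm 3 * t)) * (d - e))

/-- Jump condition (J3): the integral over `DE` of the jump of the normal flux vanishes. -/
def J3 (βm βp d e : ℝ) (cm cp : Fin 4 → ℝ) : Prop :=
  fluxDefect βm βp d e cm cp = 0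

/-- The four edge-mean (integral-value) degrees of freedom of `φ`:
bottom, right, top, left edges of `T = [0,1]²`. -/
def dofI (d e : ℝ) (cm cp : Fin 4 → ℝ) : Fin 4 → ℝ :=
  ![(∫ x in (0:ℝ)..d, rq1 cm x 0) + ∫ x in d..(1:ℝ), rq1 cp x 0,
    ∫ y in (0:ℝ)..1, rq1 cp 1 y,
    (∫ x in (0:ℝ)..e, rq1 cm x 1) + ∫ x in e..(1:ℝ), rq1 cp x 1,
    ∫ y in (0:ℝ)..1, rq1 cm 0 y]

/-- The four midpoint-value degrees of freedom of `φ`: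
values at the midpoints of the bottom, right, top, left edges of `T = [0,1]²`. -/
def dofP (d e : ℝ) (cm cp : Fin 4 → ℝ) : Fin 4 → ℝ :=
  ![phiFn d e cm cp (1/2) 0, phiFn d e cm cp 1 (1/2),
    phiFn d e cm cp (1/2) 1, phiFn d e cm cp 0 (1/2)]

/-- The partial derivative `∂ₓᵃ∂ᵧᵇ` of the rotated-Q1 polynomial with coefficients `c`. -/
def rq1D (c : Fin 4 → ℝ) : ℕ → ℕ → ℝ → ℝ → ℝ
  | 0, 0, x, y => rq1 c x y
  | 1, 0, x, _ => c 1 + 2 * c 3 * x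
  | 0, 1, _, y => c 2 - 2 * c 3 * y
  | 2, 0, _, _ => 2 * c 3
  | 1, 1, _, _ => 0
  | 0, 2, _, _ => -(2 * c 3)
  | _, _, _, _ => 0

/-- Integral of `f` over the subelement `T⁻ = {(x,y) ∈ T : x < d + (e−d)y}`. -/
def intTm (d e : ℝ) (f : ℝ → ℝ → ℝ) : ℝ :=
  ∫ y in (0:ℝ)..1, ∫ x in (0:ℝ)..(d + (e - d) * y), f x y

/-- Integral of `f` over the subelement `T⁺ = {(x,y) ∈ T : x > d + (e−d)y}`. -/
def intTp (d e : ℝ) (f : ℝ → ℝ → ℝ) : ℝ :=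
  ∫ y in (0:ℝ)..1, ∫ x in (d + (e - d) * y)..(1:ℝ), f x y

/-- The squared broken Sobolev seminorm
`|φ|²_{k,T} = Σ_{|α|=k} (∫_{T⁻}|∂^α p⁻|² + ∫_{T⁺}|∂^α p⁺|²)`, `k = 0, 1, 2`. -/
def semiSq (d e : ℝ) (cm cp : Fin 4 → ℝ) : ℕ → ℝ
  | 0 => intTm d e (fun x y => (rq1D cm 0 0 x y) ^ 2) +
      intTp d e (fun x y => (rq1D cp 0 0 x y) ^ 2)
  | 1 => (intTm d e (fun x y => (rq1D cm 1 0 x y) ^ 2) +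
        intTp d e (fun x y => (rq1D cp 1 0 x y) ^ 2)) +
      (intTm d e (fun x y => (rq1D cm 0 1 x y) ^ 2) +
        intTp d e (fun x y => (rq1D cp 0 1 x y) ^ 2))
  | 2 => (intTm d e (fun x y => (rq1D cm 2 0 x y) ^ 2) +
        intTp d e (fun x y => (rq1D cp 2 0 x y) ^ 2)) +
      (intTm d e (fun x y => (rq1D cm 1 1 x y) ^ 2) +
        intTp d e (fun x y => (rq1D cp 1 1 x y) ^ 2)) +
      (intTm d e (fun x y => (rq1D cm 0 2 x y) ^ 2) +
        intTp d e (fun x y => (rq1D cp 0 2 x y) ^ 2))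
  | _ => 0


lemma abs_mul_le_of_abs_le_one {x t M : ℝ} (hx : |x| ≤ M) (ht : |t| ≤ 1) : |x * t| ≤ M := by
  rw [abs_mul]
  exact (mul_le_of_le_one_right (abs_nonneg x) ht).trans hx

lemma hasDerivAt_quintic_primitive (c₀ c₁ c₂ c₃ c₄ c₅ x : ℝ) :
    HasDerivAt (fun t : ℝ => c₀ * t + c₁ * t ^ 2 / 2 + c₂ * t ^ 3 / 3 + c₃ * t ^ 4 / 4
        + c₄ * t ^ 5 / 5 + c₅ * t ^ 6 / 6)
      (c₀ + c₁ * x + c₂ * x ^ 2 + c₃ * x ^ 3 + c₄ * x ^ 4 + c₅ * x ^ 5) x := by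
  refine (((((((hasDerivAt_id x).const_mul c₀).add
      (((hasDerivAt_pow 2 x).const_mul c₁).div_const 2)).add
      (((hasDerivAt_pow 3 x).const_mul c₂).div_const 3)).add
      (((hasDerivAt_pow 4 x).const_mul c₃).div_const 4)).add
      (((hasDerivAt_pow 5 x).const_mul c₄).div_const 5)).add
      (((hasDerivAt_pow 6 x).const_mul c₅).div_const 6)).congr_deriv ?_
  norm_num
  ring

lemma integral_quintic {f : ℝ → ℝ} (c₀ c₁ c₂ c₃ c₄ c₅ a b : ℝ)
    (hf : ∀ x, f x = c₀ + c₁ * x + c₂ * x ^ 2 + c₃ * x ^ 3 + c₄ * x ^ 4 + c₅ * x ^ 5) :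
    ∫ x in a..b, f x
      = (c₀ * b + c₁ * b ^ 2 / 2 + c₂ * b ^ 3 / 3 + c₃ * b ^ 4 / 4 + c₄ * b ^ 5 / 5
          + c₅ * b ^ 6 / 6)
        - (c₀ * a + c₁ * a ^ 2 / 2 + c₂ * a ^ 3 / 3 + c₃ * a ^ 4 / 4 + c₄ * a ^ 5 / 5
          + c₅ * a ^ 6 / 6) := by
  rw [funext hf]
  exact intervalIntegral.integral_eq_sub_of_hasDerivAt
    (fun x _ => hasDerivAt_quintic_primitive c₀ c₁ c₂ c₃ c₄ c₅ x)
    ((by fun_prop : Continuous _).intervalIntegrable a b)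

def regionIntegral (a b : ℝ → ℝ) (f : ℝ → ℝ → ℝ) : ℝ :=
  ∫ y in (0:ℝ)..1, ∫ x in a y..b y, f x y

section regionIntegral

variable {a b a' b' : ℝ → ℝ} {f : ℝ → ℝ → ℝ}

lemma intervalIntegrable_of_continuous_uncurry (hf : Continuous fun p : ℝ × ℝ => f p.1 p.2)
    (y u v : ℝ) : IntervalIntegrable (fun x => f x y) volume u v :=
  (hf.comp (Continuous.prodMk_left y)).intervalIntegrable u v

lemma continuous_integral_between (hf : Continuous fun p : ℝ × ℝ => f p.1 p.2)
    (ha : Continuous a) (hb : Continuous b) :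
    Continuous fun y => ∫ x in a y..b y, f x y := by
  have hprim : ∀ s : ℝ → ℝ, Continuous s → Continuous fun y => ∫ x in (0:ℝ)..s y, f x y :=
    fun s hs => intervalIntegral.continuous_parametric_intervalIntegral_of_continuous
      (f := fun y x => f x y) (by fun_prop) hs
  have hsplit : ∀ y, ∫ x in a y..b y, f x y
      = (∫ x in (0:ℝ)..b y, f x y) - ∫ x in (0:ℝ)..a y, f x y := fun y =>
    (intervalIntegral.integral_interval_sub_left
      (intervalIntegrable_of_continuous_uncurry hf _ _ _)
      (intervalIntegrable_of_continuous_uncurry hf _ _ _)).symm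
  simp only [hsplit]
  exact (hprim b hb).sub (hprim a ha)

lemma regionIntegral_nonneg (hab : ∀ y ∈ Icc (0:ℝ) 1, a y ≤ b y) (hf : ∀ x y, 0 ≤ f x y) :
    0 ≤ regionIntegral a b f :=
  intervalIntegral.integral_nonneg zero_le_one fun y hy =>
    intervalIntegral.integral_nonneg (hab y hy) fun x _ => hf x y

lemma regionIntegral_mono_region (hf : Continuous fun p : ℝ × ℝ => f p.1 p.2)
    (hf₀ : ∀ x y, 0 ≤ f x y) (ha : Continuous a) (hb : Continuous b)
    (ha' : Continuous a') (hb' : Continuous b')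
    (hsub : ∀ y ∈ Icc (0:ℝ) 1, a' y ≤ a y ∧ a y ≤ b y ∧ b y ≤ b' y) :
    regionIntegral a b f ≤ regionIntegral a' b' f := by
  refine intervalIntegral.integral_mono_on zero_le_one
    ((continuous_integral_between hf ha hb).intervalIntegrable _ _)
    ((continuous_integral_between hf ha' hb').intervalIntegrable _ _) fun y hy => ?_
  obtain ⟨h₁, h₂, h₃⟩ := hsub y hy
  exact intervalIntegral.integral_mono_interval h₁ h₂ h₃
    (Filter.Eventually.of_forall fun x => hf₀ x y)
    (intervalIntegrable_of_continuous_uncurry hf _ _ _)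

lemma regionIntegral_le (hf : Continuous fun p : ℝ × ℝ => f p.1 p.2)
    (ha : Continuous a) (hb : Continuous b)
    (hab : ∀ y ∈ Icc (0:ℝ) 1, 0 ≤ a y ∧ a y ≤ b y ∧ b y ≤ 1) {M : ℝ} (hM : 0 ≤ M)
    (hfM : ∀ x ∈ Icc (0:ℝ) 1, ∀ y ∈ Icc (0:ℝ) 1, f x y ≤ M) :
    regionIntegral a b f ≤ M := by
  have hinner : ∀ y ∈ Icc (0:ℝ) 1, ∫ x in a y..b y, f x y ≤ M := fun y hy => by
    obtain ⟨h₀, h₁, h₂⟩ := hab y hy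
    calc ∫ x in a y..b y, f x y ≤ ∫ _ in a y..b y, M :=
          intervalIntegral.integral_mono_on h₁ (intervalIntegrable_of_continuous_uncurry hf _ _ _)
            intervalIntegrable_const
            fun x hx => hfM x ⟨h₀.trans hx.1, hx.2.trans h₂⟩ y hy
      _ = (b y - a y) * M := by simp
      _ ≤ M := mul_le_of_le_one_left hM (by linarith)
  calc regionIntegral a b f ≤ ∫ _ in (0:ℝ)..1, M :=
        intervalIntegral.integral_mono_on zero_le_one
          ((continuous_integral_between hf ha hb).intervalIntegrable _ _)
          intervalIntegrable_const hinner
    _ = M := by simp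

lemma regionIntegral_const_add {m : ℝ → ℝ} (hm : Continuous m) (K : ℝ) :
    regionIntegral 0 m (fun _ _ => K) + regionIntegral m 1 (fun _ _ => K) = K := by
  simp only [regionIntegral, intervalIntegral.integral_const, smul_eq_mul]
  rw [← intervalIntegral.integral_add ((by fun_prop : Continuous _).intervalIntegrable 0 1)
    ((by fun_prop : Continuous _).intervalIntegrable 0 1)]
  simp [← add_mul]

end regionIntegral

def interfaceX (d e y : ℝ) : ℝ := d + (e - d) * y

lemma interfaceX_mem_Icc {d e y : ℝ} (hd : d ∈ Icc (0:ℝ) 1) (he : e ∈ Icc (0:ℝ) 1)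
    (hy : y ∈ Icc (0:ℝ) 1) : interfaceX d e y ∈ Icc (0:ℝ) 1 := by
  unfold interfaceX
  constructor <;> nlinarith [hd.1, hd.2, he.1, he.2, hy.1, hy.2]

lemma continuous_interfaceX (d e : ℝ) : Continuous (interfaceX d e) := by
  unfold interfaceX; fun_prop

lemma intTm_eq (d e : ℝ) : intTm d e = regionIntegral 0 (interfaceX d e) := rfl

lemma intTp_eq (d e : ℝ) : intTp d e = regionIntegral (interfaceX d e) 1 := rfl

/-- `rq1Order i` is the degree of the monomial multiplying `c i` in `rq1 c`. -/
def rq1Order : Fin 4 → ℕ := ![0, 1, 1, 2]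

def CoeffBound (k : ℕ) (M : ℝ) (c : Fin 4 → ℝ) : Prop :=
  ∀ i, k ≤ rq1Order i → |c i| ≤ M

namespace CoeffBound

variable {k l : ℕ} {M N : ℝ} {c : Fin 4 → ℝ}

lemma of_le (h : CoeffBound l M c) (hlk : l ≤ k) : CoeffBound k M c :=
  fun i hi => h i (hlk.trans hi)

lemma mono (h : CoeffBound k M c) (hMN : M ≤ N) : CoeffBound k N c :=
  fun i hi => (h i hi).trans hMN

lemma nonneg (h : CoeffBound k M c) (hk : k ≤ 2) : 0 ≤ M :=
  (abs_nonneg _).trans (h 3 hk)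

lemma abs_rq1D_le (h : CoeffBound k M c) {a b : ℕ} (hab : a + b = k) (hk : k ≤ 2)
    {x y : ℝ} (hx : x ∈ Icc (0:ℝ) 1) (hy : y ∈ Icc (0:ℝ) 1) :
    |rq1D c a b x y| ≤ 4 * M := by
  subst hab
  have hM := h.nonneg hk
  have hcoeff : ∀ i, a + b ≤ rq1Order i → -M ≤ c i ∧ c i ≤ M := fun i hi => abs_le.mp (h i hi)
  have hmul : ∀ i, a + b ≤ rq1Order i → ∀ t : ℝ, |t| ≤ 1 → -M ≤ c i * t ∧ c i * t ≤ M :=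
    fun i hi t ht => abs_le.mp (abs_mul_le_of_abs_le_one (h i hi) ht)
  have hx' : |x| ≤ 1 := abs_le.mpr ⟨by linarith [hx.1], hx.2⟩
  have hy' : |y| ≤ 1 := abs_le.mpr ⟨by linarith [hy.1], hy.2⟩
  have hxy : |x ^ 2 - y ^ 2| ≤ 1 :=
    abs_le.mpr ⟨by nlinarith [hy.1, hy.2, hx.1], by nlinarith [hx.1, hx.2, hy.1]⟩
  obtain ⟨rfl, rfl⟩ | ⟨rfl, rfl⟩ | ⟨rfl, rfl⟩ | ⟨rfl, rfl⟩ | ⟨rfl, rfl⟩ | ⟨rfl, rfl⟩ :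
      (a = 0 ∧ b = 0) ∨ (a = 1 ∧ b = 0) ∨ (a = 0 ∧ b = 1) ∨ (a = 2 ∧ b = 0) ∨
        (a = 1 ∧ b = 1) ∨ (a = 0 ∧ b = 2) := by omega
  all_goals simp only [rq1D, rq1, abs_le]
  · have := hcoeff 0 (by decide)
    have := hmul 1 (by decide) x hx'
    have := hmul 2 (by decide) y hy'
    have := hmul 3 (by decide) _ hxy
    constructor <;> linarith
  · have := hcoeff 1 (by decide)
    have := hmul 3 (by decide) x hx'
    constructor <;> linarith
  · have := hcoeff 2 (by decide)
    have := hmul 3 (by decide) y hy'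
    constructor <;> linarith
  · have := hcoeff 3 (by decide)
    constructor <;> linarith
  · constructor <;> linarith
  · have := hcoeff 3 (by decide)
    constructor <;> linarith

end CoeffBound

lemma coeffBound_one_iff {M : ℝ} {c : Fin 4 → ℝ} :
    CoeffBound 1 M c ↔ |c 1| ≤ M ∧ |c 2| ≤ M ∧ |c 3| ≤ M := by
  refine ⟨fun h => ⟨h 1 le_rfl, h 2 le_rfl, h 3 one_le_two⟩, fun h i hi => ?_⟩
  fin_cases i <;> simp_all [rq1Order]

lemma coeffBound_two_iff {M : ℝ} {c : Fin 4 → ℝ} : CoeffBound 2 M c ↔ |c 3| ≤ M := by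
  refine ⟨fun h => h 3 le_rfl, fun h i hi => ?_⟩
  fin_cases i <;> simp_all [rq1Order]

lemma continuous_rq1D (c : Fin 4 → ℝ) (a b : ℕ) :
    Continuous fun p : ℝ × ℝ => rq1D c a b p.1 p.2 := by
  rcases a with _ | _ | _ | a <;> rcases b with _ | _ | _ | b <;> simp only [rq1D, rq1] <;> fun_prop

def pieceSq (a b : ℝ → ℝ) (c : Fin 4 → ℝ) : ℕ → ℝ
  | 0 => regionIntegral a b fun x y => rq1D c 0 0 x y ^ 2
  | 1 => regionIntegral a b (fun x y => rq1D c 1 0 x y ^ 2) +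
      regionIntegral a b (fun x y => rq1D c 0 1 x y ^ 2)
  | 2 => regionIntegral a b (fun x y => rq1D c 2 0 x y ^ 2) +
      regionIntegral a b (fun x y => rq1D c 1 1 x y ^ 2) +
      regionIntegral a b (fun x y => rq1D c 0 2 x y ^ 2)
  | _ => 0

lemma semiSq_eq (d e : ℝ) (cm cp : Fin 4 → ℝ) (k : ℕ) :
    semiSq d e cm cp k
      = pieceSq 0 (interfaceX d e) cm k + pieceSq (interfaceX d e) 1 cp k := by
  match k with
  | 0 => rfl
  | 1 => simp only [semiSq, pieceSq, intTm_eq, intTp_eq]; ring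
  | 2 => simp only [semiSq, pieceSq, intTm_eq, intTp_eq]; ring
  | _ + 3 => simp [semiSq, pieceSq]

section pieceSq

variable {a b : ℝ → ℝ} {c : Fin 4 → ℝ} {k : ℕ}

lemma pieceSq_nonneg (hab : ∀ y ∈ Icc (0:ℝ) 1, a y ≤ b y) : 0 ≤ pieceSq a b c k := by
  have h : ∀ i j, 0 ≤ regionIntegral a b fun x y => rq1D c i j x y ^ 2 :=
    fun i j => regionIntegral_nonneg hab fun x y => sq_nonneg _
  match k with
  | 0 => exact h 0 0
  | 1 => exact add_nonneg (h 1 0) (h 0 1)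
  | 2 => exact add_nonneg (add_nonneg (h 2 0) (h 1 1)) (h 0 2)
  | _ + 3 => exact le_rfl

lemma pieceSq_le (ha : Continuous a) (hb : Continuous b)
    (hab : ∀ y ∈ Icc (0:ℝ) 1, 0 ≤ a y ∧ a y ≤ b y ∧ b y ≤ 1) {M : ℝ} (hk : k ≤ 2)
    (hc : CoeffBound k M c) : pieceSq a b c k ≤ 48 * M ^ 2 := by
  have h : ∀ i j, i + j = k → (regionIntegral a b fun x y => rq1D c i j x y ^ 2) ≤ 16 * M ^ 2 :=
    fun i j hij => by
      refine regionIntegral_le ((continuous_rq1D c i j).pow 2) ha hb hab (by positivity)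
        fun x hx y hy => ?_
      nlinarith [abs_le.mp (hc.abs_rq1D_le hij hk hx hy)]
  interval_cases k <;> simp only [pieceSq]
  · linarith [h 0 0 rfl, sq_nonneg M]
  · linarith [h 1 0 rfl, h 0 1 rfl, sq_nonneg M]
  · linarith [h 2 0 rfl, h 1 1 rfl, h 0 2 rfl]

end pieceSq

lemma semiSq_two {d e : ℝ} {cm cp : Fin 4 → ℝ} (h : cp 3 = cm 3) :
    semiSq d e cm cp 2 = 8 * cm 3 ^ 2 := by
  have hK := fun K => regionIntegral_const_add (continuous_interfaceX d e) K
  simp only [semiSq, rq1D, intTm_eq, intTp_eq, h]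
  linarith [hK ((2 * cm 3) ^ 2), hK (0 ^ 2), hK ((-(2 * cm 3)) ^ 2)]

lemma sum_sq_le_triangle_left (c : Fin 4 → ℝ) :
    ∑ i, c i ^ 2 ≤ 10000 * regionIntegral 0 (fun y => (1 - y) / 2) fun x y => rq1 c x y ^ 2 := by
  have hinner : ∀ Y : ℝ, ∫ x in (0:ℝ)..(1 - Y) / 2, rq1 c x Y ^ 2
      = (1/2 * c 0 ^ 2 + 1/4 * c 0 * c 1 + 1/12 * c 0 * c 3 + 1/24 * c 1 ^ 2
          + 1/32 * c 1 * c 3 + 1/160 * c 3 ^ 2)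
        + (-1/2 * c 0 ^ 2 - 1/2 * c 0 * c 1 + c 0 * c 2 - 1/4 * c 0 * c 3
          - 1/8 * c 1 ^ 2 + 1/4 * c 1 * c 2 - 1/8 * c 1 * c 3 + 1/12 * c 2 * c 3
          - 1/32 * c 3 ^ 2) * Y
        + (1/4 * c 0 * c 1 - c 0 * c 2 - 3/4 * c 0 * c 3 + 1/8 * c 1 ^ 2
          - 1/2 * c 1 * c 2 - 1/16 * c 1 * c 3 + 1/2 * c 2 ^ 2 - 1/4 * c 2 * c 3
          - 1/48 * c 3 ^ 2) * Y ^ 2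
        + (11/12 * c 0 * c 3 - 1/24 * c 1 ^ 2 + 1/4 * c 1 * c 2 + 3/8 * c 1 * c 3
          - 1/2 * c 2 ^ 2 - 3/4 * c 2 * c 3 + 3/16 * c 3 ^ 2) * Y ^ 3
        + (-7/32 * c 1 * c 3 + 11/12 * c 2 * c 3 + 9/32 * c 3 ^ 2) * Y ^ 4
        + (-203/480 * c 3 ^ 2) * Y ^ 5 := fun Y => by
    rw [integral_quintic ((c 0 + c 2 * Y - c 3 * Y ^ 2) ^ 2)
      (2 * c 1 * (c 0 + c 2 * Y - c 3 * Y ^ 2))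
      (c 1 ^ 2 + 2 * c 3 * (c 0 + c 2 * Y - c 3 * Y ^ 2)) (2 * c 1 * c 3) (c 3 ^ 2) 0
      0 ((1 - Y) / 2) fun x => by simp only [rq1]; ring]
    ring
  simp only [regionIntegral, Pi.zero_apply, integral_quintic _ _ _ _ _ _ 0 1 hinner,
    Fin.sum_univ_four]
  -- The squares are the rows of the LDLᵀ factorisation of the Gram matrix of
  -- `c ↦ ∫ rq1 c ^ 2` over the triangle, minus `10⁻⁴ I`.
  nlinarith [sq_nonneg (c 0 + 1250/7497 * c 1 + 2500/7497 * c 2 - 625/4998 * c 3),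
    sq_nonneg (c 1 - 1564375/1515643 * c 2 + 3750375/3031286 * c 3),
    sq_nonneg (c 2 - 18862375/23455646 * c 3), sq_nonneg (c 3)]

lemma sum_sq_le_triangle_right (c : Fin 4 → ℝ) :
    ∑ i, c i ^ 2 ≤ 10000 * regionIntegral (fun y => (1 + y) / 2) 1 fun x y => rq1 c x y ^ 2 := by
  have hinner : ∀ Y : ℝ, ∫ x in (1 + Y) / 2..(1:ℝ), rq1 c x Y ^ 2
      = (1/2 * c 0 ^ 2 + 3/4 * c 0 * c 1 + 7/12 * c 0 * c 3 + 7/24 * c 1 ^ 2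
          + 15/32 * c 1 * c 3 + 31/160 * c 3 ^ 2)
        + (-1/2 * c 0 ^ 2 - 1/2 * c 0 * c 1 + c 0 * c 2 - 1/4 * c 0 * c 3
          - 1/8 * c 1 ^ 2 + 3/4 * c 1 * c 2 - 1/8 * c 1 * c 3 + 7/12 * c 2 * c 3
          - 1/32 * c 3 ^ 2) * Y
        + (-1/4 * c 0 * c 1 - c 0 * c 2 - 5/4 * c 0 * c 3 - 1/8 * c 1 ^ 2
          - 1/2 * c 1 * c 2 - 15/16 * c 1 * c 3 + 1/2 * c 2 ^ 2 - 1/4 * c 2 * c 3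
          - 31/48 * c 3 ^ 2) * Y ^ 2
        + (11/12 * c 0 * c 3 - 1/24 * c 1 ^ 2 - 1/4 * c 1 * c 2 + 3/8 * c 1 * c 3
          - 1/2 * c 2 ^ 2 - 5/4 * c 2 * c 3 + 3/16 * c 3 ^ 2) * Y ^ 3
        + (7/32 * c 1 * c 3 + 11/12 * c 2 * c 3 + 23/32 * c 3 ^ 2) * Y ^ 4
        + (-203/480 * c 3 ^ 2) * Y ^ 5 := fun Y => by
    rw [integral_quintic ((c 0 + c 2 * Y - c 3 * Y ^ 2) ^ 2)
      (2 * c 1 * (c 0 + c 2 * Y - c 3 * Y ^ 2))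
      (c 1 ^ 2 + 2 * c 3 * (c 0 + c 2 * Y - c 3 * Y ^ 2)) (2 * c 1 * c 3) (c 3 ^ 2) 0
      ((1 + Y) / 2) 1 fun x => by simp only [rq1]; ring]
    ring
  simp only [regionIntegral, Pi.one_apply, integral_quintic _ _ _ _ _ _ 0 1 hinner,
    Fin.sum_univ_four]
  nlinarith [sq_nonneg (c 0 + 6250/7497 * c 1 + 2500/7497 * c 2 + 8125/14994 * c 3),
    sq_nonneg (c 1 + 1549375/1485643 * c 2 + 2458375/2971286 * c 3),
    sq_nonneg (c 2 - 1501711375/1815856034 * c 3), sq_nonneg (c 3)]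

lemma abs_le_mul_sqrt_of_sq_le {x K S : ℝ} (hK : 0 ≤ K) (h : x ^ 2 ≤ K ^ 2 * S) :
    |x| ≤ K * √S := by
  simpa [Real.sqrt_mul (sq_nonneg K), Real.sqrt_sq hK] using Real.abs_le_sqrt h

lemma coeffBound_pieceSq {a b : ℝ → ℝ}
    (htri : ∀ c : Fin 4 → ℝ, ∑ i, c i ^ 2 ≤ 10000 * regionIntegral a b fun x y => rq1 c x y ^ 2)
    (c : Fin 4 → ℝ) {k : ℕ} (hk : k ≤ 1) : CoeffBound k (100 * √(pieceSq a b c k)) c := by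
  interval_cases k
  · refine fun i _ => abs_le_mul_sqrt_of_sq_le (by norm_num) ?_
    calc c i ^ 2 ≤ ∑ j, c j ^ 2 :=
          Finset.single_le_sum (fun j _ => sq_nonneg (c j)) (Finset.mem_univ i)
      _ ≤ 100 ^ 2 * pieceSq a b c 0 := by norm_num; exact htri c
  have hx : (fun x y => rq1D c 1 0 x y ^ 2) = fun x y => rq1 ![c 1, 2 * c 3, 0, 0] x y ^ 2 := by
    funext x y; simp [rq1D, rq1]
  have hy : (fun x y => rq1D c 0 1 x y ^ 2) = fun x y => rq1 ![c 2, 0, -(2 * c 3), 0] x y ^ 2 := by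
    funext x y; simp [rq1D, rq1, sub_eq_add_neg]
  have hsumx : c 1 ^ 2 + (2 * c 3) ^ 2
      ≤ 10000 * regionIntegral a b fun x y => rq1D c 1 0 x y ^ 2 := by
    simpa [hx, Fin.sum_univ_four] using htri ![c 1, 2 * c 3, 0, 0]
  have hsumy : c 2 ^ 2 + (2 * c 3) ^ 2
      ≤ 10000 * regionIntegral a b fun x y => rq1D c 0 1 x y ^ 2 := by
    simpa [hy, Fin.sum_univ_four] using htri ![c 2, 0, -(2 * c 3), 0]
  rw [coeffBound_one_iff]
  refine ⟨?_, ?_, ?_⟩ <;> refine abs_le_mul_sqrt_of_sq_le (by norm_num) ?_ <;>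
    simp only [pieceSq] <;> nlinarith [sq_nonneg (c 1), sq_nonneg (c 2), sq_nonneg (c 3)]

/-- The normal derivative `∇(rq1 c) · (1, d − e)` averaged along the interface `DE`. -/
def meanFlux (d e : ℝ) (c : Fin 4 → ℝ) : ℝ := c 1 + (d - e) * c 2 + 2 * e * c 3

structure JumpRel (βm βp d e : ℝ) (cm cp : Fin 4 → ℝ) : Prop where
  coeff0 : cp 0 = cm 0 - (cp 1 - cm 1) * d
  coeff2 : cp 2 = cm 2 + (cp 1 - cm 1) * (d - e)
  coeff3 : cp 3 = cm 3
  flux : βp * meanFlux d e cp = βm * meanFlux d e cm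

section Jump

variable {βm βp d e : ℝ} {cm cp : Fin 4 → ℝ}

lemma fluxDefect_eq :
    fluxDefect βm βp d e cm cp = βp * meanFlux d e cp - βm * meanFlux d e cm := by
  rw [fluxDefect, integral_quintic
    (βp * (cp 1 + 2 * cp 3 * d) - βm * (cm 1 + 2 * cm 3 * d) + (βp * cp 2 - βm * cm 2) * (d - e))
    (4 * (βp * cp 3 - βm * cm 3) * (e - d)) 0 0 0 0 0 1 fun t => by ring]
  simp only [meanFlux]
  ring

lemma jumpRel_of_J (h1 : J1 d e cm cp) (h2 : J2 cm cp) (h3 : J3 βm βp d e cm cp) :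
    JumpRel βm βp d e cm cp := by
  obtain ⟨hD, hE⟩ := h1
  rw [J2] at h2
  rw [J3, fluxDefect_eq] at h3
  simp only [rq1] at hD hE
  have coeff0 : cp 0 = cm 0 - (cp 1 - cm 1) * d := by linear_combination -hD + d ^ 2 * h2
  refine ⟨coeff0, ?_, h2.symm, by linarith⟩
  linear_combination -hE + (e ^ 2 - 1) * h2 - coeff0

lemma abs_meanFlux_le {M : ℝ} {c : Fin 4 → ℝ} (hd : d ∈ Icc (0:ℝ) 1) (he : e ∈ Icc (0:ℝ) 1)
    (hc : CoeffBound 1 M c) : |meanFlux d e c| ≤ 4 * M := by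
  obtain ⟨h1, h2, h3⟩ := coeffBound_one_iff.mp hc
  have h2' := abs_le.mp <| abs_mul_le_of_abs_le_one h2 (t := d - e)
    (abs_le.mpr ⟨by linarith [hd.1, he.2], by linarith [hd.2, he.1]⟩)
  have h3' := abs_le.mp <| abs_mul_le_of_abs_le_one h3 (t := e)
    (abs_le.mpr ⟨by linarith [he.1], he.2⟩)
  rw [meanFlux, abs_le]
  constructor <;> linarith [abs_le.mp h1]

namespace JumpRel

lemma symm (hJ : JumpRel βm βp d e cm cp) : JumpRel βp βm d e cp cm where
  coeff0 := by linarith [hJ.coeff0]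
  coeff2 := by linarith [hJ.coeff2]
  coeff3 := hJ.coeff3.symm
  flux := hJ.flux.symm

lemma abs_sub_le_abs_jump (hJ : JumpRel βm βp d e cm cp) (hd : d ∈ Icc (0:ℝ) 1)
    (he : e ∈ Icc (0:ℝ) 1) (i : Fin 4) : |cp i - cm i| ≤ |cp 1 - cm 1| := by
  fin_cases i
  · show |cp 0 - cm 0| ≤ _
    rw [show cp 0 - cm 0 = (cp 1 - cm 1) * -d by linarith [hJ.coeff0]]
    exact abs_mul_le_of_abs_le_one le_rfl
      (abs_le.mpr ⟨by linarith [hd.2], by linarith [hd.1]⟩)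
  · exact le_rfl
  · show |cp 2 - cm 2| ≤ _
    rw [show cp 2 - cm 2 = (cp 1 - cm 1) * (d - e) by linarith [hJ.coeff2]]
    exact abs_mul_le_of_abs_le_one le_rfl
      (abs_le.mpr ⟨by linarith [hd.1, he.2], by linarith [hd.2, he.1]⟩)
  · simp [hJ.coeff3]

lemma abs_jump_le (hJ : JumpRel βm βp d e cm cp) (hβp : 0 < βp) :
    |cp 1 - cm 1| ≤ |βp - βm| / βp * |meanFlux d e cm| := by
  have key : (cp 1 - cm 1) * (1 + (d - e) ^ 2) = (βm - βp) / βp * meanFlux d e cm := by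
    have hflux := hJ.flux
    simp only [meanFlux] at hflux ⊢
    rw [div_mul_eq_mul_div, eq_div_iff hβp.ne']
    linear_combination hflux - βp * (d - e) * hJ.coeff2 - 2 * e * βp * hJ.coeff3
  calc |cp 1 - cm 1| ≤ |cp 1 - cm 1| * (1 + (d - e) ^ 2) :=
        le_mul_of_one_le_right (abs_nonneg _) (le_add_of_nonneg_right (sq_nonneg _))
    _ = |βp - βm| / βp * |meanFlux d e cm| := by
        rw [← abs_of_pos (by positivity : (0:ℝ) < 1 + (d - e) ^ 2), ← abs_mul, key, abs_mul,
          abs_div, abs_of_pos hβp, abs_sub_comm]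

lemma coeffBound (hJ : JumpRel βm βp d e cm cp) (hβp : 0 < βp) (hd : d ∈ Icc (0:ℝ) 1)
    (he : e ∈ Icc (0:ℝ) 1) {k : ℕ} {M : ℝ} (hk : k ≤ 1) (hc : CoeffBound k M cm) :
    CoeffBound k ((1 + 4 * (|βp - βm| / βp)) * M) cp := by
  have hM := hc.nonneg (hk.trans one_le_two)
  have hjump : |cp 1 - cm 1| ≤ 4 * (|βp - βm| / βp) * M :=
    calc |cp 1 - cm 1| ≤ |βp - βm| / βp * |meanFlux d e cm| := hJ.abs_jump_le hβp
      _ ≤ |βp - βm| / βp * (4 * M) := by gcongr; exact abs_meanFlux_le hd he (hc.of_le hk)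
      _ = 4 * (|βp - βm| / βp) * M := by ring
  intro i hi
  linarith [abs_sub_abs_le_abs_sub (cp i) (cm i), hc i hi, hJ.abs_sub_le_abs_jump hd he i]

end JumpRel

end Jump

section bigSide

variable {d e : ℝ} (cm cp : Fin 4 → ℝ) {k : ℕ}

lemma coeffBound_semiSq_minus (hd : 1 / 2 ≤ d) (hd₁ : d ≤ 1) (he : e ∈ Icc (0:ℝ) 1)
    (hk : k ≤ 1) :
    CoeffBound k (100 * √(semiSq d e cm cp k)) cm := by
  have hd' : d ∈ Icc (0:ℝ) 1 := ⟨by linarith, hd₁⟩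
  have htri : ∀ c : Fin 4 → ℝ,
      ∑ i, c i ^ 2 ≤ 10000 * regionIntegral 0 (interfaceX d e) fun x y => rq1 c x y ^ 2 :=
    fun c => (sum_sq_le_triangle_left c).trans <| by
      gcongr
      refine regionIntegral_mono_region (by simp only [rq1]; fun_prop) (fun _ _ => sq_nonneg _)
        continuous_zero (by fun_prop) continuous_zero (continuous_interfaceX d e) fun y hy => ?_
      refine ⟨le_rfl, by simp only [Pi.zero_apply]; linarith [hy.2], ?_⟩
      unfold interfaceX
      nlinarith [hy.1, hy.2, he.1]
  refine (coeffBound_pieceSq htri cm hk).mono ?_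
  gcongr
  rw [semiSq_eq]
  exact le_add_of_nonneg_right (pieceSq_nonneg fun y hy => (interfaceX_mem_Icc hd' he hy).2)

lemma coeffBound_semiSq_plus (hd₀ : 0 ≤ d) (hd : d ≤ 1 / 2) (he : e ∈ Icc (0:ℝ) 1)
    (hk : k ≤ 1) :
    CoeffBound k (100 * √(semiSq d e cm cp k)) cp := by
  have hd' : d ∈ Icc (0:ℝ) 1 := ⟨hd₀, by linarith⟩
  have htri : ∀ c : Fin 4 → ℝ,
      ∑ i, c i ^ 2 ≤ 10000 * regionIntegral (interfaceX d e) 1 fun x y => rq1 c x y ^ 2 :=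
    fun c => (sum_sq_le_triangle_right c).trans <| by
      gcongr
      refine regionIntegral_mono_region (by simp only [rq1]; fun_prop) (fun _ _ => sq_nonneg _)
        (by fun_prop) continuous_one (continuous_interfaceX d e) continuous_one fun y hy => ?_
      refine ⟨?_, by simp only [Pi.one_apply]; linarith [hy.2], le_rfl⟩
      unfold interfaceX
      nlinarith [hy.1, hy.2, he.2]
  refine (coeffBound_pieceSq htri cp hk).mono ?_
  gcongr
  rw [semiSq_eq]
  exact le_add_of_nonneg_left (pieceSq_nonneg fun y hy => (interfaceX_mem_Icc hd' he hy).1)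

end bigSide

def ifeConst (βm βp : ℝ) : ℝ := 100 * (1 + 4 * (|βp - βm| / βm) + 4 * (|βp - βm| / βp))

lemma coeffBound_semiSq {βm βp d e : ℝ} {cm cp : Fin 4 → ℝ} (hβm : 0 < βm) (hβp : 0 < βp)
    (hd : d ∈ Icc (0:ℝ) 1) (he : e ∈ Icc (0:ℝ) 1) (hJ : JumpRel βm βp d e cm cp) {k : ℕ}
    (hk : k ≤ 2) :
    CoeffBound k (ifeConst βm βp * √(semiSq d e cm cp k)) cm ∧
      CoeffBound k (ifeConst βm βp * √(semiSq d e cm cp k)) cp := by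
  set s := √(semiSq d e cm cp k)
  have hs : 0 ≤ s := Real.sqrt_nonneg _
  have hρm : 0 ≤ |βp - βm| / βm := by positivity
  have hρp : 0 ≤ |βp - βm| / βp := by positivity
  have hbig : 100 * s ≤ ifeConst βm βp * s := by unfold ifeConst; nlinarith
  have hsmall_m : (1 + 4 * (|βp - βm| / βm)) * (100 * s) ≤ ifeConst βm βp * s := by
    unfold ifeConst; nlinarith
  have hsmall_p : (1 + 4 * (|βp - βm| / βp)) * (100 * s) ≤ ifeConst βm βp * s := by
    unfold ifeConst; nlinarith
  obtain hk₁ | rfl : k ≤ 1 ∨ k = 2 := by omega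
  · rcases le_total (1 / 2) d with hd₂ | hd₂
    · have hm := coeffBound_semiSq_minus cm cp hd₂ hd.2 he hk₁
      exact ⟨hm.mono hbig, (hJ.coeffBound hβp hd he hk₁ hm).mono hsmall_p⟩
    · have hp := coeffBound_semiSq_plus cm cp hd.1 hd₂ he hk₁
      have hm := hJ.symm.coeffBound hβm hd he hk₁ hp
      rw [abs_sub_comm] at hm
      exact ⟨hm.mono hsmall_m, hp.mono hbig⟩
  · have h3 : |cm 3| ≤ s :=
      Real.abs_le_sqrt (by rw [semiSq_two hJ.coeff3]; nlinarith [sq_nonneg (cm 3)])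
    replace h3 : |cm 3| ≤ ifeConst βm βp * s := by linarith
    exact ⟨coeffBound_two_iff.mpr h3, coeffBound_two_iff.mpr (hJ.coeff3 ▸ h3)⟩

lemma semiSq_le {d e : ℝ} {cm cp : Fin 4 → ℝ} (hd : d ∈ Icc (0:ℝ) 1) (he : e ∈ Icc (0:ℝ) 1)
    {k : ℕ} (hk : k ≤ 2) {M : ℝ} (hm : CoeffBound k M cm) (hp : CoeffBound k M cp) :
    semiSq d e cm cp k ≤ 96 * M ^ 2 := by
  have hX := fun y (hy : y ∈ Icc (0:ℝ) 1) => interfaceX_mem_Icc hd he hy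
  rw [semiSq_eq]
  linarith [pieceSq_le continuous_zero (continuous_interfaceX d e)
      (fun y hy => ⟨le_rfl, (hX y hy).1, (hX y hy).2⟩) hk hm,
    pieceSq_le (continuous_interfaceX d e) continuous_one
      (fun y hy => ⟨(hX y hy).1, (hX y hy).2, le_rfl⟩) hk hp]

/-- Inverse inequalities for rotated-Q1 IFE functions, uniform in the
interface location (reference element, `h = 1`):
(i) `|φ|_{k,∞,T} ≤ C |φ|_{k,T}` and (ii) `|φ|_{k,T} ≤ C |φ|_{l,T}` for `0 ≤ l ≤ k ≤ 2`. -/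
theorem ife_inverse_inequalities
    (βm βp : ℝ) (hβm : 0 < βm) (hβp : 0 < βp) :
    ∃ C > 0, ∀ d ∈ Ioo (0:ℝ) 1, ∀ e ∈ Ioo (0:ℝ) 1,
      ∀ cm cp : Fin 4 → ℝ,
        J1 d e cm cp → J2 cm cp → J3 βm βp d e cm cp →
        (∀ k a b : ℕ, a + b = k → k ≤ 2 →
          ∀ x ∈ Icc (0:ℝ) 1, ∀ y ∈ Icc (0:ℝ) 1,
            (x < d + (e - d) * y →
              |rq1D cm a b x y| ≤ C * Real.sqrt (semiSq d e cm cp k)) ∧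
            (d + (e - d) * y < x →
              |rq1D cp a b x y| ≤ C * Real.sqrt (semiSq d e cm cp k))) ∧
        (∀ l k : ℕ, l ≤ k → k ≤ 2 →
          Real.sqrt (semiSq d e cm cp k) ≤ C * Real.sqrt (semiSq d e cm cp l)) := by
  have hA : 0 < ifeConst βm βp := by unfold ifeConst; positivity
  refine ⟨10 * ifeConst βm βp, by positivity, ?_⟩
  rintro d hd e he cm cp h1 h2 h3
  have hbound := fun k (hk : k ≤ 2) => coeffBound_semiSq hβm hβp (Ioo_subset_Icc_self hd)
    (Ioo_subset_Icc_self he) (jumpRel_of_J h1 h2 h3) hk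
  have hfour : ∀ k, 4 * (ifeConst βm βp * √(semiSq d e cm cp k))
      ≤ 10 * ifeConst βm βp * √(semiSq d e cm cp k) := fun k => by
    nlinarith [mul_nonneg hA.le (Real.sqrt_nonneg (semiSq d e cm cp k))]
  refine ⟨fun k a b hab hk x hx y hy => ⟨fun _ => ?_, fun _ => ?_⟩, fun l k hlk hk => ?_⟩
  · exact ((hbound k hk).1.abs_rq1D_le hab hk hx hy).trans (hfour k)
  · exact ((hbound k hk).2.abs_rq1D_le hab hk hx hy).trans (hfour k)
  · obtain ⟨hm, hp⟩ := hbound l (hlk.trans hk)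
    have hS := semiSq_le (Ioo_subset_Icc_self hd) (Ioo_subset_Icc_self he) hk
      (hm.of_le hlk) (hp.of_le hlk)
    rw [Real.sqrt_le_left (by positivity)]
    nlinarith [sq_nonneg (ifeConst βm βp * √(semiSq d e cm cp l))]

end
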